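/- Let n be even. Then the convex hull of the set of degree-count vectors { (n_0(g), …, n_{n-1}(g)) : g a simple graph on n vertices } in R^n equals n·Δ^{n-1}, the standard (n-1)-simplex scaled by n intersected with the nonnegative orthant, i.e., the set { x ∈ R^n : x_i ≥ 0, Σ_i x_i = n }. -/

import Mathlib

/-!
A degree-count vector has nonnegative entries summing to `n`, so the hull lies in the scaled
simplex `n • stdSimplex`. Conversely, the vertex `n • e_k` of that simplex is the degree-count
vector of any `k`-regular graph on `n` vertices, and when `n * k` is even such a graph is the
circulant graph on `Fin n` with jumps `±1, …, ±(k / 2)`, together with the antipodal jump `n / 2`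
when `k` is odd.
-/

/-- The degree of vertex `v` in `g`. -/
noncomputable def dkDeg {n : ℕ} (g : SimpleGraph (Fin n)) (v : Fin n) : ℕ :=
  Nat.card (g.neighborSet v)

/-- `n_k(g)`: the number of vertices of `g` of degree `k`. -/
noncomputable def dkNk {n : ℕ} (g : SimpleGraph (Fin n)) (k : ℕ) : ℕ :=
  Nat.card {v : Fin n // dkDeg g v = k}

/-- The degree-count vector of `g`, as a point of `ℝⁿ`. -/
noncomputable def dkVec {n : ℕ} (g : SimpleGraph (Fin n)) : Fin n → ℝ :=
  fun k => (dkNk g (k : ℕ) : ℝ)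

open Finset SimpleGraph
open scoped Pointwise

section Simplex

variable {ι : Type*} [Fintype ι]

lemma setOf_nonneg_sum_eq_smul_stdSimplex {c : ℝ} (hc : 0 < c) :
    {x : ι → ℝ | (∀ i, 0 ≤ x i) ∧ ∑ i, x i = c} = c • stdSimplex ℝ ι := by
  ext x
  rw [Set.mem_smul_set_iff_inv_smul_mem₀ hc.ne']
  simp only [Set.mem_ofPred_eq, stdSimplex, Pi.smul_apply, smul_eq_mul, ← Finset.mul_sum]
  refine and_congr (forall_congr' fun i => ?_) ?_
  · rw [mul_nonneg_iff_of_pos_left (inv_pos.2 hc)]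
  · rw [inv_mul_eq_one₀ hc.ne', eq_comm]

lemma convexHull_eq_smul_stdSimplex [DecidableEq ι] {s : Set (ι → ℝ)} {c : ℝ}
    (hs : s ⊆ c • stdSimplex ℝ ι) (hvert : ∀ i, c • Pi.single i 1 ∈ s) :
    convexHull ℝ s = c • stdSimplex ℝ ι := by
  refine (convexHull_min hs ((convex_stdSimplex ℝ ι).smul c)).antisymm ?_
  rw [← convexHull_rangle_single_eq_stdSimplex, ← convexHull_smul, Set.smul_set_range]
  exact convexHull_mono (Set.range_subset_iff.2 hvert)

end Simplex

namespace SimpleGraph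

variable {G : Type*} [AddGroup G] {s : Set G}

lemma circulantGraph_neighborSet (hs : -s = s) (h0 : 0 ∉ s) (v : G) :
    (circulantGraph s).neighborSet v = (· + v) '' s := by
  ext w
  have hneg : v - w ∈ s ↔ w - v ∈ s := by rw [← neg_sub, ← Set.mem_neg, hs]
  simp only [mem_neighborSet, circulantGraph_adj, hneg, or_self, Set.mem_image]
  constructor
  · rintro ⟨-, h⟩
    exact ⟨w - v, h, sub_add_cancel w v⟩
  · rintro ⟨t, ht, rfl⟩
    refine ⟨fun h => h0 ?_, by simpa using ht⟩
    obtain rfl : t = 0 := by simpa using h.symm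
    exact ht

lemma card_neighborSet_circulantGraph (hs : -s = s) (h0 : 0 ∉ s) (v : G) :
    Nat.card ((circulantGraph s).neighborSet v) = Nat.card s := by
  rw [circulantGraph_neighborSet hs h0, Nat.card_image_of_injective (add_left_injective v)]

end SimpleGraph

def regularJumps (n k : ℕ) : Finset ℕ :=
  Icc 1 (k / 2) ∪ Icc (n - k / 2) (n - 1) ∪ if k % 2 = 1 then {n / 2} else ∅

section RegularJumps

variable {n k t : ℕ}

lemma mod_two_eq_zero_of_even_mul (hnk : Even (n * k)) (hk : k % 2 = 1) : n % 2 = 0 := by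
  rcases Nat.even_mul.1 hnk with h | h <;> rw [Nat.even_iff] at h <;> omega

lemma mem_regularJumps_bounds (hk : k < n) (ht : t ∈ regularJumps n k) : 0 < t ∧ t < n := by
  simp only [regularJumps, mem_union, mem_Icc] at ht
  split_ifs at ht <;> simp at ht <;> omega

lemma card_regularJumps (hk : k < n) (hnk : Even (n * k)) : #(regularJumps n k) = k := by
  have hpar := mod_two_eq_zero_of_even_mul hnk
  rw [regularJumps, card_union_of_disjoint, card_union_of_disjoint]
  · split_ifs <;> simp <;> omega
  · simp only [Finset.disjoint_left, mem_Icc]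
    omega
  · split_ifs
    · simp only [Finset.disjoint_left, mem_union, mem_Icc, mem_singleton]
      omega
    · exact disjoint_empty_right _

lemma sub_mem_regularJumps_iff (hnk : Even (n * k)) (ht : t < n) :
    n - t ∈ regularJumps n k ↔ t ∈ regularJumps n k := by
  have hpar := mod_two_eq_zero_of_even_mul hnk
  simp only [regularJumps, mem_union, mem_Icc]
  split_ifs <;> simp <;> omega

end RegularJumps

lemma exists_forall_dkDeg_eq {n k : ℕ} (hk : k < n) (hnk : Even (n * k)) :
    ∃ g : SimpleGraph (Fin n), ∀ v, dkDeg g v = k := by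
  have : NeZero n := ⟨by omega⟩
  set S := (regularJumps n k).attachFin fun _ ht => (mem_regularJumps_bounds hk ht).2
  have hS : ∀ x : Fin n, x ∈ S ↔ (x : ℕ) ∈ regularJumps n k := fun x => mem_attachFin _
  have h0 : (0 : Fin n) ∉ S := fun h =>
    ((mem_regularJumps_bounds hk ((hS 0).1 h)).1).ne' (Fin.val_zero n)
  have hneg : -(S : Set (Fin n)) = S := by
    ext x
    rw [Set.mem_neg, mem_coe, mem_coe]
    rcases eq_or_ne x 0 with rfl | hx
    · rw [neg_zero]
    · have hx : (x : ℕ) ≠ 0 := by rw [← Fin.val_zero n]; exact Fin.val_ne_iff.2 hx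
      rw [hS, hS, Fin.val_neg', Nat.mod_eq_of_lt (by omega), sub_mem_regularJumps_iff hnk x.isLt]
  refine ⟨circulantGraph S, fun v => ?_⟩
  rw [dkDeg, card_neighborSet_circulantGraph hneg h0, Nat.card_coe_set_eq, Set.ncard_coe_finset,
    card_attachFin, card_regularJumps hk hnk]

section DegreeCounts

variable {n : ℕ} (g : SimpleGraph (Fin n))

lemma dkDeg_eq_degree [DecidableRel g.Adj] (v : Fin n) : dkDeg g v = g.degree v := by
  rw [dkDeg, Nat.card_eq_fintype_card, card_neighborSet_eq_degree]

lemma dkDeg_lt (v : Fin n) : dkDeg g v < n := by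
  classical
  simpa [dkDeg_eq_degree] using g.degree_lt_card_verts v

lemma sum_dkNk : ∑ k : Fin n, dkNk g k = n := by
  classical
  have := card_eq_sum_card_fiberwise (s := univ) (t := univ)
    (f := fun v => (⟨dkDeg g v, dkDeg_lt g v⟩ : Fin n)) fun _ _ => mem_univ _
  rw [card_univ, Fintype.card_fin] at this
  refine (sum_congr rfl fun k _ => ?_).trans this.symm
  rw [dkNk, Nat.card_eq_fintype_card, Fintype.card_subtype]
  simp [Fin.ext_iff]

lemma sum_dkVec : ∑ i, dkVec g i = n := by
  simp only [dkVec]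
  exact_mod_cast sum_dkNk g

lemma dkVec_eq_smul_single {k : Fin n} (hg : ∀ v, dkDeg g v = k) :
    dkVec g = (n : ℝ) • Pi.single k 1 := by
  funext i
  simp only [dkVec, dkNk, hg, Pi.smul_apply, Pi.single_apply, smul_eq_mul, mul_ite, mul_one,
    mul_zero, Fin.ext_iff, eq_comm (a := (i : ℕ))]
  split_ifs with h <;> simp [h]

end DegreeCounts

/-- for `n` even, the convex hull of the degree-count vectors of
simple graphs on `n` vertices is the scaled simplex `n·Δ^{n-1}`. -/
theorem stmt10 (n : ℕ) (hn : 0 < n) (heven : Even n) :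
    convexHull ℝ {x : Fin n → ℝ | ∃ g : SimpleGraph (Fin n), x = dkVec g}
      = {x : Fin n → ℝ | (∀ i, 0 ≤ x i) ∧ ∑ i, x i = n} := by
  have hsimplex :=
    setOf_nonneg_sum_eq_smul_stdSimplex (ι := Fin n) (Nat.cast_pos.2 hn : (0 : ℝ) < n)
  rw [hsimplex]
  refine convexHull_eq_smul_stdSimplex ?_ fun k => ?_
  · rintro _ ⟨g, rfl⟩
    rw [← hsimplex]
    exact ⟨fun i => Nat.cast_nonneg _, sum_dkVec g⟩
  · obtain ⟨g, hg⟩ := exists_forall_dkDeg_eq k.isLt (heven.mul_right k)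
    exact ⟨g, (dkVec_eq_smul_single g hg).symm⟩
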